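/- Let δ(A) = α·|A| − |E(A)| with α > 0, and for A ⊆ B define A ≤* B to mean δ(A) ≤ δ(B') whenever A ⊆ B' ⊆ B. If A ≤* C and B ⊆ C, then A ∩ B ≤* B. -/

import Mathlib

def edgeCount {V : Type*} [Fintype V] [DecidableEq V] (G : SimpleGraph V)
    [DecidableRel G.Adj] (s : Finset V) : ℕ :=
  (G.edgeFinset ∩ s.sym2).card

noncomputable def pdim {V : Type*} [Fintype V] [DecidableEq V] (α : ℝ) (G : SimpleGraph V)
    [DecidableRel G.Adj] (s : Finset V) : ℝ :=
  α * s.card - edgeCount G s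

/-- `A ≤* B` : self-sufficiency of `A` in `B`. -/
def leqStar {V : Type*} [Fintype V] [DecidableEq V] (α : ℝ) (G : SimpleGraph V)
    [DecidableRel G.Adj] (A B : Finset V) : Prop :=
  A ⊆ B ∧ ∀ B' : Finset V, A ⊆ B' → B' ⊆ B → pdim α G A ≤ pdim α G B'

/-!
The predimension is submodular: the vertex count is modular and the edge count supermodular.
Given `A ∩ B ⊆ B' ⊆ B`, we have `A ∩ B' = A ∩ B` and `A ⊆ A ∪ B' ⊆ C`, so
`δ(A ∩ B) + δ(A) ≤ δ(A ∩ B) + δ(A ∪ B') ≤ δ(A) + δ(B')`.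
-/

open Finset

theorem Finset.sym2_inter {V : Type*} [DecidableEq V] (X Y : Finset V) :
    (X ∩ Y).sym2 = X.sym2 ∩ Y.sym2 := by
  ext z
  simp only [mem_sym2_iff, mem_inter]
  exact ⟨fun h => ⟨fun a ha => (h a ha).1, fun a ha => (h a ha).2⟩,
    fun h a ha => ⟨h.1 a ha, h.2 a ha⟩⟩

section Predimension

variable {V : Type*} [Fintype V] [DecidableEq V] (G : SimpleGraph V) [DecidableRel G.Adj]

theorem edgeCount_add_edgeCount_le (X Y : Finset V) :
    edgeCount G X + edgeCount G Y ≤ edgeCount G (X ∪ Y) + edgeCount G (X ∩ Y) := by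
  unfold edgeCount
  rw [← card_union_add_card_inter, ← inter_union_distrib_left, ← inter_inter_distrib_left,
    ← sym2_inter]
  gcongr
  exact union_subset (sym2_mono subset_union_left) (sym2_mono subset_union_right)

theorem pdim_union_add_pdim_inter_le (α : ℝ) (X Y : Finset V) :
    pdim α G (X ∪ Y) + pdim α G (X ∩ Y) ≤ pdim α G X + pdim α G Y := by
  have hcard : ((X ∪ Y).card : ℝ) + (X ∩ Y).card = X.card + Y.card := by
    exact_mod_cast card_union_add_card_inter X Y
  have hedge : (edgeCount G X : ℝ) + edgeCount G Y ≤
      edgeCount G (X ∪ Y) + edgeCount G (X ∩ Y) := by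
    exact_mod_cast edgeCount_add_edgeCount_le G X Y
  unfold pdim
  linear_combination α * hcard + hedge

end Predimension

theorem leqStar_inter_general {V : Type*} [Fintype V] [DecidableEq V] (G : SimpleGraph V)
    [DecidableRel G.Adj] (α : ℝ) (A B C : Finset V)
    (hAC : leqStar α G A C) (hBC : B ⊆ C) : leqStar α G (A ∩ B) B := by
  obtain ⟨hAC, hA_le⟩ := hAC
  refine ⟨inter_subset_right, fun B' hAB' hB'B => ?_⟩
  have hinter : A ∩ B' = A ∩ B :=
    Subset.antisymm (inter_subset_inter_left hB'B) (subset_inter inter_subset_left hAB')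
  have hA_le_union : pdim α G A ≤ pdim α G (A ∪ B') :=
    hA_le _ subset_union_left (union_subset hAC (hB'B.trans hBC))
  have hsub := pdim_union_add_pdim_inter_le G α A B'
  rw [hinter] at hsub
  linarith

/-- If `A ≤* C` and `B ⊆ C` then `A ∩ B ≤* B`. -/
theorem leqStar_inter {V : Type*} [Fintype V] [DecidableEq V] (G : SimpleGraph V)
    [DecidableRel G.Adj] (α : ℝ) (hα : 0 < α) (A B C : Finset V)
    (hAC : leqStar α G A C) (hBC : B ⊆ C) : leqStar α G (A ∩ B) B :=
  leqStar_inter_general G α A B C hAC hBC
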